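/- arXiv:2506.00795 — 3 statements merged into one kernel-verified Lean document; each statement's English description precedes it below -/
import Mathlib

section
/- Let Q_max = max_i Q(i). For every selection function q⋆ : ℝ → ℝ such that for each m ∈ (0,1), q⋆(m) is a global minimizer of L_m over ℝ, the function q⋆ tends to Q_max as m tends to 1 from the left (i.e., Tendsto q⋆ (𝓝[<] 1 restricted to (0,1)) (𝓝 Q_max)). -/
/-!
Write `M = maxᵢ Q i` and `C = ∑ᵢ (Q i - M)²`. At any `q ≥ M` every residual is nonpositive, so
`L_m(q) = (1 - m) ∑ᵢ (Q i - q)²`; this is strictly increasing on `[M, ∞)`, hence a minimizer `q⋆`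
satisfies `q⋆ ≤ M`, and `L_m(M) = (1 - m) C`. At `q⋆ ≤ M` the term of a maximal index alone
contributes `m (M - q⋆)²`, so `m (M - q⋆)² ≤ L_m(q⋆) ≤ L_m(M) = (1 - m) C`, and
`|q⋆ - M| ≤ √((1 - m) / m · C) → 0` as `m → 1`.
-/

/-- The expectile regression loss `L_m(q) = ∑ i, w_i(q) · (Q i − q)²`, where
`w_i(q) = m` if `Q i ≥ q` and `w_i(q) = 1 − m` otherwise (Eq. (7) of the paper). -/
noncomputable def expectileLoss (n : ℕ) (Q : Fin n → ℝ) (m q : ℝ) : ℝ :=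
  ∑ i, (if q ≤ Q i then m else 1 - m) * (Q i - q) ^ 2

open Filter Topology

section ExpectileLoss

variable {n : ℕ} {Q : Fin n → ℝ} {m q M : ℝ}

theorem expectileLoss_eq_of_forall_le (hQ : ∀ i, Q i ≤ q) :
    expectileLoss n Q m q = (1 - m) * ∑ i, (Q i - q) ^ 2 := by
  rw [expectileLoss, Finset.mul_sum]
  refine Finset.sum_congr rfl fun i _ => ?_
  by_cases h : q ≤ Q i
  · simp [le_antisymm (hQ i) h]
  · simp [h]

theorem expectileLoss_lt_of_forall_le_of_lt (hne : Nonempty (Fin n)) (hm : m < 1)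
    (hQ : ∀ i, Q i ≤ M) (hMq : M < q) :
    expectileLoss n Q m M < expectileLoss n Q m q := by
  rw [expectileLoss_eq_of_forall_le hQ,
    expectileLoss_eq_of_forall_le fun i => (hQ i).trans hMq.le]
  refine mul_lt_mul_of_pos_left (Finset.sum_lt_sum_of_nonempty Finset.univ_nonempty
    fun i _ => ?_) (sub_pos.mpr hm)
  nlinarith [hQ i]

theorem mul_sq_le_expectileLoss (hm : m ∈ Set.Icc (0 : ℝ) 1) (i : Fin n) (hq : q ≤ Q i) :
    m * (Q i - q) ^ 2 ≤ expectileLoss n Q m q := by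
  have hterm : ∀ j, 0 ≤ (if q ≤ Q j then m else 1 - m) * (Q j - q) ^ 2 := fun j => by
    split_ifs <;> nlinarith [hm.1, hm.2, sq_nonneg (Q j - q)]
  have hi := Finset.single_le_sum (fun j _ => hterm j) (Finset.mem_univ i)
  rwa [if_pos hq] at hi

theorem le_max_of_isMinimizer (hne : Nonempty (Fin n)) (hm : m < 1) (hQ : ∀ i, Q i ≤ M)
    (hmin : ∀ q', expectileLoss n Q m q ≤ expectileLoss n Q m q') : q ≤ M :=
  not_lt.mp fun hMq => (expectileLoss_lt_of_forall_le_of_lt hne hm hQ hMq).not_ge (hmin M)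

variable (hm : m ∈ Set.Ioo (0 : ℝ) 1) (hQ : ∀ i, Q i ≤ M) {i₀ : Fin n} (hi₀ : Q i₀ = M)
  (hmin : ∀ q', expectileLoss n Q m q ≤ expectileLoss n Q m q')
include hm hQ hi₀ hmin

theorem mul_sq_sub_le_of_isMinimizer :
    m * (M - q) ^ 2 ≤ (1 - m) * ∑ i, (Q i - M) ^ 2 :=
  calc m * (M - q) ^ 2
      ≤ expectileLoss n Q m q :=
        hi₀ ▸ mul_sq_le_expectileLoss (Set.Ioo_subset_Icc_self hm) i₀
          (hi₀ ▸ le_max_of_isMinimizer ⟨i₀⟩ hm.2 hQ hmin)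
    _ ≤ expectileLoss n Q m M := hmin M
    _ = (1 - m) * ∑ i, (Q i - M) ^ 2 := expectileLoss_eq_of_forall_le hQ

theorem abs_sub_le_sqrt_of_isMinimizer :
    |q - M| ≤ √((1 - m) / m * ∑ i, (Q i - M) ^ 2) := by
  refine Real.abs_le_sqrt ?_
  rw [div_mul_eq_mul_div, le_div_iff₀ hm.1]
  calc (q - M) ^ 2 * m = m * (M - q) ^ 2 := by ring
    _ ≤ _ := mul_sq_sub_le_of_isMinimizer hm hQ hi₀ hmin

end ExpectileLoss

/-- **Theorem 2.** Any selection `q⋆ : ℝ → ℝ` of global minimizers of the expectile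
loss `L_m` (for `m ∈ (0,1)`) tends to `Q_max = max_i Q i` as `m → 1⁻` within `(0,1)`. -/
theorem expectile_minimizer_tendsto_max
    (n : ℕ) (hn : 0 < n) (Q : Fin n → ℝ)
    (qstar : ℝ → ℝ)
    (hmin : ∀ m ∈ Set.Ioo (0 : ℝ) 1, ∀ q : ℝ,
      expectileLoss n Q m (qstar m) ≤ expectileLoss n Q m q) :
    Filter.Tendsto qstar (nhdsWithin 1 (Set.Ioo (0 : ℝ) 1))
      (nhds (Finset.univ.sup' (Finset.univ_nonempty_iff.mpr ⟨⟨0, hn⟩⟩) Q)) := by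
  set M := Finset.univ.sup' (Finset.univ_nonempty_iff.mpr ⟨⟨0, hn⟩⟩) Q
  obtain ⟨i₀, -, hi₀⟩ := Finset.exists_mem_eq_sup' (Finset.univ_nonempty_iff.mpr ⟨⟨0, hn⟩⟩) Q
  have hQ : ∀ i, Q i ≤ M := fun i => Finset.le_sup' Q (Finset.mem_univ i)
  set C := ∑ i, (Q i - M) ^ 2
  have hbound : Tendsto (fun m : ℝ => √((1 - m) / m * C)) (𝓝 1) (𝓝 0) := by
    have hcont : ContinuousAt (fun m : ℝ => √((1 - m) / m * C)) 1 := by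
      fun_prop (disch := norm_num)
    simpa using hcont.tendsto
  rw [tendsto_iff_dist_tendsto_zero]
  exact squeeze_zero' (Eventually.of_forall fun _ => dist_nonneg)
    (eventually_nhdsWithin_of_forall fun m hm =>
      abs_sub_le_sqrt_of_isMinimizer hm hQ hi₀.symm (hmin m hm))
    (hbound.mono_left nhdsWithin_le_nhds)
end

section
/- If 0 < m₁ < m₂ < 1, q₁ is a global minimizer of L_{m₁} over ℝ, and q₂ is a global minimizer of L_{m₂} over ℝ, then q₁ ≤ q₂ (monotonicity of the expectile-regression minimizer in the expectile level m). -/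
theorem le_of_le_of_le_of_strictMono_sub {α β : Type*} [LinearOrder α] [AddCommGroup β]
    [PartialOrder β] [IsOrderedAddMonoid β] {f g : α → β} {a b : α}
    (hfg : StrictMono (f - g)) (ha : f a ≤ f b) (hb : g b ≤ g a) : a ≤ b :=
  hfg.le_iff_le.mp <| sub_le_sub_iff.mpr (add_le_add ha hb)

theorem Finset.strictMono_sum {ι α β : Type*} [Preorder α] [AddCommMonoid β] [PartialOrder β]
    [IsOrderedCancelAddMonoid β] {s : Finset ι} (hs : s.Nonempty) {f : ι → α → β}
    (hf : ∀ i ∈ s, StrictMono (f i)) : StrictMono fun x => ∑ i ∈ s, f i x :=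
  fun _ _ hxy => Finset.sum_lt_sum_of_nonempty hs fun i hi => hf i hi hxy

theorem strictMono_mul_abs : StrictMono fun x : ℝ => x * |x| := by
  intro a b hab
  rcases abs_cases a with ⟨ha, _⟩ | ⟨ha, _⟩ <;> rcases abs_cases b with ⟨hb, _⟩ | ⟨hb, _⟩ <;>
    simp only [ha, hb] <;> nlinarith

theorem expectileLoss_sub_expectileLoss (n : ℕ) (Q : Fin n → ℝ) (m₁ m₂ q : ℝ) :
    expectileLoss n Q m₁ q - expectileLoss n Q m₂ q =
      (m₂ - m₁) * ∑ i, (q - Q i) * |q - Q i| := by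
  simp only [expectileLoss, ← Finset.sum_sub_distrib, Finset.mul_sum]
  refine Finset.sum_congr rfl fun i _ => ?_
  by_cases h : q ≤ Q i
  · rw [if_pos h, if_pos h, abs_of_nonpos (sub_nonpos.mpr h)]
    ring
  · rw [if_neg h, if_neg h, abs_of_pos (sub_pos.mpr (not_le.mp h))]
    ring

theorem strictMono_expectileLoss_sub_expectileLoss {n : ℕ} (hn : 0 < n) (Q : Fin n → ℝ)
    {m₁ m₂ : ℝ} (hm₁₂ : m₁ < m₂) :
    StrictMono (expectileLoss n Q m₁ - expectileLoss n Q m₂) := by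
  have hsum : StrictMono fun q => ∑ i, (q - Q i) * |q - Q i| :=
    Finset.strictMono_sum (Finset.univ_nonempty_iff.mpr (Fin.pos_iff_nonempty.mp hn))
      fun i _ => strictMono_mul_abs.comp fun _ _ h => sub_lt_sub_right h (Q i)
  intro a b hab
  simp only [Pi.sub_apply, expectileLoss_sub_expectileLoss]
  exact hsum.const_mul (sub_pos.mpr hm₁₂) hab

theorem expectile_minimizer_mono_general
    (n : ℕ) (hn : 0 < n) (Q : Fin n → ℝ)
    (m₁ m₂ : ℝ) (hm₁₂ : m₁ < m₂)
    (q₁ q₂ : ℝ)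
    (hq₁ : ∀ q : ℝ, expectileLoss n Q m₁ q₁ ≤ expectileLoss n Q m₁ q)
    (hq₂ : ∀ q : ℝ, expectileLoss n Q m₂ q₂ ≤ expectileLoss n Q m₂ q) :
    q₁ ≤ q₂ :=
  le_of_le_of_le_of_strictMono_sub (strictMono_expectileLoss_sub_expectileLoss hn Q hm₁₂)
    (hq₁ q₂) (hq₂ q₁)

/-- Monotonicity of the expectile-regression minimizer in the expectile level:
if `0 < m₁ < m₂ < 1` and `q₁`, `q₂` are global minimizers of `L_{m₁}`, `L_{m₂}`
respectively, then `q₁ ≤ q₂`. -/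
theorem expectile_minimizer_mono
    (n : ℕ) (hn : 0 < n) (Q : Fin n → ℝ)
    (m₁ m₂ : ℝ) (hm₁ : 0 < m₁) (hm₁₂ : m₁ < m₂) (hm₂ : m₂ < 1)
    (q₁ q₂ : ℝ)
    (hq₁ : ∀ q : ℝ, expectileLoss n Q m₁ q₁ ≤ expectileLoss n Q m₁ q)
    (hq₂ : ∀ q : ℝ, expectileLoss n Q m₂ q₂ ≤ expectileLoss n Q m₂ q) :
    q₁ ≤ q₂ :=
  expectile_minimizer_mono_general n hn Q m₁ m₂ hm₁₂ q₁ q₂ hq₁ hq₂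
end

section
/- For every m ∈ (0,1), every global minimizer q of L_m over ℝ satisfies q ≤ max_i Q(i). In particular, the predicted maximal Q-value obtained by expectile regression never exceeds the largest Q-value supported by the offline dataset (no out-of-distribution overestimation). -/
section ExpectileLoss

variable {n : ℕ} {Q : Fin n → ℝ} {m p p' : ℝ}

/-- The weight `m` is only picked up by the points with `Q i = p`, whose terms vanish. -/
theorem expectileLoss_of_forall_le (hQ : ∀ i, Q i ≤ p) :
    expectileLoss n Q m p = (1 - m) * ∑ i, (p - Q i) ^ 2 := by
  rw [expectileLoss, Finset.mul_sum]
  refine Finset.sum_congr rfl fun i _ => ?_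
  split_ifs with hpQ
  · obtain rfl : Q i = p := le_antisymm (hQ i) hpQ
    ring
  · ring

theorem expectileLoss_lt_of_forall_le_of_lt_s3 (hn : 0 < n) (hm : m < 1)
    (hQ : ∀ i, Q i ≤ p) (hpp' : p < p') :
    expectileLoss n Q m p < expectileLoss n Q m p' := by
  have hQ' : ∀ i, Q i ≤ p' := fun i => (hQ i).trans hpp'.le
  rw [expectileLoss_of_forall_le hQ, expectileLoss_of_forall_le hQ']
  have hsq : ∑ i, (p - Q i) ^ 2 < ∑ i, (p' - Q i) ^ 2 := by
    have : Nonempty (Fin n) := ⟨⟨0, hn⟩⟩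
    refine Finset.sum_lt_sum_of_nonempty Finset.univ_nonempty fun i _ => ?_
    exact pow_lt_pow_left₀ (by linarith) (sub_nonneg.mpr (hQ i)) two_ne_zero
  exact mul_lt_mul_of_pos_left hsq (sub_pos.mpr hm)

end ExpectileLoss

/-- No out-of-distribution overestimation: for every `m ∈ (0,1)`, every global
minimizer `q` of the expectile loss `L_m` satisfies `q ≤ max_i Q i`. -/
theorem expectile_minimizer_le_max
    (n : ℕ) (hn : 0 < n) (Q : Fin n → ℝ)
    (m : ℝ) (hm : m ∈ Set.Ioo (0 : ℝ) 1)
    (q : ℝ) (hq : ∀ q' : ℝ, expectileLoss n Q m q ≤ expectileLoss n Q m q') :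
    q ≤ Finset.univ.sup' (Finset.univ_nonempty_iff.mpr ⟨⟨0, hn⟩⟩) Q := by
  by_contra! hmax_lt
  have hle_max : ∀ i, Q i ≤ Finset.univ.sup' (Finset.univ_nonempty_iff.mpr ⟨⟨0, hn⟩⟩) Q :=
    fun i => Finset.le_sup' Q (Finset.mem_univ i)
  exact (hq _).not_gt (expectileLoss_lt_of_forall_le_of_lt_s3 hn hm.2 hle_max hmax_lt)
end
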